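/- arXiv:1808.02681 — 2 statements merged into one kernel-verified Lean document; each statement's English description precedes it below -/
import Mathlib

section
/- Let μ, ν ∈ P₂(ℝ^d). Then there exists a unique probability measure μ̄ ∈ B_ν = {η : η ≼_c ν} minimizing W₂(·, μ) over B_ν, i.e. W₂(μ̄, μ) = inf_{η ≼_c ν} W₂(η, μ). -/
noncomputable section
open Set MeasureTheory Filter Topology ProbabilityTheory Metric

/-- Squared quadratic Wasserstein cost, as an infimum over couplings. -/
def W2sq {d : ℕ} (μ ν : Measure (EuclideanSpace ℝ (Fin d))) : ℝ :=
  sInf { c : ℝ | ∃ π : Measure (EuclideanSpace ℝ (Fin d) × EuclideanSpace ℝ (Fin d)),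
    IsProbabilityMeasure π ∧ π.map Prod.fst = μ ∧ π.map Prod.snd = ν ∧
    c = ∫ p, ‖p.1 - p.2‖ ^ 2 ∂π }

/-- Convex order: `η ≼_c ν` iff `∫ f dη ≤ ∫ f dν` for every convex Lipschitz `f`. -/
def ConvexOrder {d : ℕ} (η ν : Measure (EuclideanSpace ℝ (Fin d))) : Prop :=
  ∀ f : EuclideanSpace ℝ (Fin d) → ℝ, ConvexOn ℝ Set.univ f →
    (∃ K : NNReal, LipschitzWith K f) → ∫ x, f x ∂η ≤ ∫ x, f x ∂ν

namespace Stmt12Aux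

abbrev Ed (d : ℕ) := EuclideanSpace ℝ (Fin d)
abbrev Om (d : ℕ) := Ed d × ℝ

def unif : Measure ℝ := volume.restrict (Ioo (0:ℝ) 1)

instance : IsProbabilityMeasure unif :=
  ⟨by rw [unif, Measure.restrict_apply_univ]; simp [Real.volume_Ioo]⟩

lemma quantile_le_iff (F : StieltjesFunction ℝ) (h0 : Tendsto F atBot (𝓝 0))
    (h1 : Tendsto F atTop (𝓝 1)) {u : ℝ} (hu0 : 0 < u) (hu1 : u < 1) (r : ℝ) :
    sInf {r' : ℝ | u ≤ F r'} ≤ r ↔ u ≤ F r := by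
  set A : Set ℝ := {r' : ℝ | u ≤ F r'} with hA
  have hne : A.Nonempty := by
    obtain ⟨x, hx⟩ := (h1.eventually (eventually_ge_nhds hu1)).exists
    exact ⟨x, hx⟩
  have hbdd : BddBelow A := by
    obtain ⟨r₀, hr₀⟩ := eventually_atBot.mp (h0.eventually (eventually_lt_nhds hu0))
    exact ⟨r₀, fun a ha => le_of_not_gt fun hlt => absurd (hr₀ a hlt.le) (not_lt.mpr ha)⟩
  constructor
  · intro h
    have h2 : ∀ x ∈ Ioi (sInf A), u ≤ F x := by
      intro x hx
      obtain ⟨a, ha, hax⟩ := exists_lt_of_csInf_lt hne hx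
      exact ha.trans (F.mono hax.le)
    haveI : Nonempty (Ioi (sInf A)) := ⟨⟨sInf A + 1, by simp⟩⟩
    have h3 : u ≤ F (sInf A) := by
      rw [← F.iInf_Ioi_eq (sInf A)]
      exact le_ciInf fun x => h2 x x.2
    exact h3.trans (F.mono h)
  · intro h
    exact csInf_le hbdd h


lemma vol_Ioo_inter_Iic {c : ℝ} (h0 : 0 ≤ c) (h1 : c ≤ 1) :
    volume (Ioo (0:ℝ) 1 ∩ Iic c) = ENNReal.ofReal c := by
  rcases lt_or_ge c 1 with hc | hc
  · have h : Ioo (0:ℝ) 1 ∩ Iic c = Ioc 0 c := by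
      ext x
      constructor
      · rintro ⟨⟨hx1, _⟩, hx3⟩; exact ⟨hx1, hx3⟩
      · rintro ⟨hx1, hx2⟩; exact ⟨⟨hx1, lt_of_le_of_lt hx2 hc⟩, hx2⟩
    rw [h, Real.volume_Ioc, sub_zero]
  · have hc1 : c = 1 := le_antisymm h1 hc
    subst hc1
    have h : Ioo (0:ℝ) 1 ∩ Iic 1 = Ioo 0 1 :=
      inter_eq_left.mpr fun x hx => hx.2.le
    rw [h, Real.volume_Ioo, sub_zero]

variable {d : ℕ}

lemma exists_realization (μ : Measure (Ed d)) [IsProbabilityMeasure μ]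
    (π : Measure (Ed d × Ed d)) [IsProbabilityMeasure π]
    (hsnd : π.map Prod.snd = μ) :
    ∃ X : Om d → Ed d, Measurable X ∧
      (μ.prod unif).map (fun ω => (X ω, ω.1)) = π := by
  classical
  obtain ⟨e, he⟩ := MeasureTheory.exists_measurableEmbedding_real (Ed d)
  obtain ⟨g, hg, hge⟩ := he.exists_measurable_extend (measurable_id (α := Ed d))
    (fun _ => ⟨0⟩)
  set ρ : Measure (Ed d × ℝ) := π.map (fun p => (p.2, e p.1)) with hρdef
  have hmape : Measurable fun p : Ed d × Ed d => (p.2, e p.1) :=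
    measurable_snd.prodMk (he.measurable.comp measurable_fst)
  haveI hρprob : IsProbabilityMeasure ρ := Measure.isProbabilityMeasure_map hmape.aemeasurable
  have hρfst : ρ.fst = μ := by
    rw [hρdef, Measure.fst, Measure.map_map measurable_fst hmape]
    exact hsnd
  set Q : Om d → ℝ :=
    fun ω => if ω.2 ∈ Ioo (0:ℝ) 1 then sInf {r : ℝ | ω.2 ≤ condCDF ρ ω.1 r} else 0 with hQdef
  have hQle : ∀ (a : Ed d) (u : ℝ), u ∈ Ioo (0:ℝ) 1 → ∀ r : ℝ,
      (Q (a, u) ≤ r ↔ u ≤ condCDF ρ a r) := by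
    intro a u hu r
    simp only [hQdef, hu, if_true]
    exact quantile_le_iff _ (tendsto_condCDF_atBot ρ a) (tendsto_condCDF_atTop ρ a)
      hu.1 hu.2 r
  have hQmeas : Measurable Q := by
    apply measurable_of_Iic
    intro r
    have h1 : MeasurableSet {ω : Om d | ω.2 ≤ condCDF ρ ω.1 r} :=
      measurableSet_le measurable_snd ((measurable_condCDF ρ r).comp measurable_fst)
    have h2 : MeasurableSet {ω : Om d | ω.2 ∈ Ioo (0:ℝ) 1} :=
      measurable_snd measurableSet_Ioo
    by_cases h0r : (0:ℝ) ≤ r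
    · have hset : Q ⁻¹' Iic r =
          ({ω : Om d | ω.2 ∈ Ioo (0:ℝ) 1} ∩ {ω : Om d | ω.2 ≤ condCDF ρ ω.1 r}) ∪
          {ω : Om d | ω.2 ∈ Ioo (0:ℝ) 1}ᶜ := by
        ext ω
        by_cases hω : ω.2 ∈ Ioo (0:ℝ) 1
        · simp only [mem_preimage, mem_Iic, mem_union, mem_inter_iff, mem_setOf_eq,
            mem_compl_iff, hω, not_true, or_false, true_and]
          have := hQle ω.1 ω.2 hω r
          simpa using this
        · simp only [mem_preimage, mem_Iic, mem_union, mem_inter_iff, mem_setOf_eq,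
            mem_compl_iff, hω, false_and, false_or, not_false_iff, iff_true]
          simp only [hQdef, hω, if_false]
          exact h0r
      rw [hset]
      exact (h2.inter h1).union h2.compl
    · have hset : Q ⁻¹' Iic r =
          {ω : Om d | ω.2 ∈ Ioo (0:ℝ) 1} ∩ {ω : Om d | ω.2 ≤ condCDF ρ ω.1 r} := by
        ext ω
        by_cases hω : ω.2 ∈ Ioo (0:ℝ) 1
        · simp only [mem_preimage, mem_Iic, mem_inter_iff, mem_setOf_eq, hω, true_and]
          have := hQle ω.1 ω.2 hω r
          simpa using this
        · simp only [mem_preimage, mem_Iic, mem_inter_iff, mem_setOf_eq, hω, false_and,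
            iff_false, not_le]
          simp only [hQdef, hω, if_false]
          exact lt_of_not_ge h0r
      rw [hset]
      exact h2.inter h1
  have hpairQ : Measurable fun ω : Om d => (ω.1, Q ω) := measurable_fst.prodMk hQmeas
  haveI : IsProbabilityMeasure ((μ.prod unif).map (fun ω : Om d => (ω.1, Q ω))) :=
    Measure.isProbabilityMeasure_map hpairQ.aemeasurable
  have h_core : (μ.prod unif).map (fun ω : Om d => (ω.1, Q ω)) = ρ := by
    have hgen : (Prod.instMeasurableSpace : MeasurableSpace (Ed d × ℝ)) =
        MeasurableSpace.generateFrom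
          (image2 (· ×ˢ ·) {s : Set (Ed d) | MeasurableSet s} (range Iic)) := by
      refine (generateFrom_eq_prod MeasurableSpace.generateFrom_measurableSet ?_
        isCountablySpanning_measurableSet ?_).symm
      · rw [← borel_eq_generateFrom_Iic ℝ]
        exact (BorelSpace.measurable_eq (α := ℝ)).symm
      · refine ⟨fun n : ℕ => Iic (n : ℝ), fun n => ⟨(n : ℝ), rfl⟩, ?_⟩
        refine eq_univ_of_forall fun x => mem_iUnion.2 ?_
        obtain ⟨n, hn⟩ := exists_nat_ge x
        exact ⟨n, hn⟩
    refine ext_of_generate_finite _ hgen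
      (MeasurableSpace.isPiSystem_measurableSet.prod isPiSystem_Iic) ?_ ?_
    · rintro _ ⟨s, hs', _, ⟨r, rfl⟩, rfl⟩
      have hs : MeasurableSet s := hs'
      rw [Measure.map_apply hpairQ (hs.prod measurableSet_Iic)]
      have hpre : (fun ω : Om d => (ω.1, Q ω)) ⁻¹' (s ×ˢ Iic r) =
          {ω : Om d | ω.1 ∈ s ∧ Q ω ≤ r} := by
        ext ω; simp [Set.mem_prod]
      rw [hpre]
      have hmeaspre : MeasurableSet {ω : Om d | ω.1 ∈ s ∧ Q ω ≤ r} :=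
        (measurable_fst hs).inter (hQmeas measurableSet_Iic)
      rw [Measure.prod_apply hmeaspre]
      have hslice : ∀ x : Ed d,
          unif (Prod.mk x ⁻¹' {ω : Om d | ω.1 ∈ s ∧ Q ω ≤ r}) =
          s.indicator (fun x => ENNReal.ofReal (condCDF ρ x r)) x := by
        intro x
        by_cases hxs : x ∈ s
        · have hpre2 : Prod.mk x ⁻¹' {ω : Om d | ω.1 ∈ s ∧ Q ω ≤ r} =
              {u : ℝ | Q (x, u) ≤ r} := by
            ext u; simp [hxs]
          rw [hpre2, indicator_of_mem hxs]
          have hmeasu : MeasurableSet {u : ℝ | Q (x, u) ≤ r} := by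
            have : Measurable fun u : ℝ => Q (x, u) := hQmeas.comp measurable_prodMk_left
            exact this measurableSet_Iic
          rw [unif, Measure.restrict_apply hmeasu]
          have hinter : {u : ℝ | Q (x, u) ≤ r} ∩ Ioo (0:ℝ) 1 =
              Ioo (0:ℝ) 1 ∩ Iic (condCDF ρ x r) := by
            ext u
            constructor
            · rintro ⟨h1u, h2u⟩
              exact ⟨h2u, (hQle x u h2u r).mp h1u⟩
            · rintro ⟨h1u, h2u⟩
              exact ⟨(hQle x u h1u r).mpr h2u, h1u⟩
          rw [hinter]
          exact vol_Ioo_inter_Iic (condCDF_nonneg ρ x r) (condCDF_le_one ρ x r)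
        · have hpre2 : Prod.mk x ⁻¹' {ω : Om d | ω.1 ∈ s ∧ Q ω ≤ r} = (∅ : Set ℝ) := by
            ext u; simp [hxs]
          rw [hpre2, indicator_of_notMem hxs]
          simp
      rw [lintegral_congr hslice, lintegral_indicator hs _, ← hρfst]
      exact setLIntegral_condCDF ρ r hs
    · simp [measure_univ]
  refine ⟨g ∘ Q, hg.comp hQmeas, ?_⟩
  have h2 : (fun ω : Om d => ((g ∘ Q) ω, ω.1)) =
      (fun q : Ed d × ℝ => (g q.2, q.1)) ∘ (fun ω : Om d => (ω.1, Q ω)) := rfl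
  have hgq : Measurable fun q : Ed d × ℝ => (g q.2, q.1) :=
    (hg.comp measurable_snd).prodMk measurable_fst
  rw [h2, ← Measure.map_map hgq hpairQ, h_core, hρdef,
    Measure.map_map hgq hmape]
  have h3 : ((fun q : Ed d × ℝ => (g q.2, q.1)) ∘ (fun p : Ed d × Ed d => (p.2, e p.1))) =
      fun p : Ed d × Ed d => (g (e p.1), p.2) := rfl
  rw [h3]
  have h4 : (fun p : Ed d × Ed d => (g (e p.1), p.2)) = id := by
    funext p
    have := congrFun hge p.1
    simp only [Function.comp_apply, id_eq] at this ⊢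
    rw [this]
  rw [h4, Measure.map_id]


lemma lip_approx (F : Set (Ed d)) (n : ℕ) :
    LipschitzWith (n : NNReal) (fun x : Ed d => max (1 - (n:ℝ) * infDist x F) 0) := by
  refine LipschitzWith.of_dist_le_mul fun x y => ?_
  have h1 : dist (max (1 - (n:ℝ) * infDist x F) 0) (max (1 - (n:ℝ) * infDist y F) 0) ≤
      dist (1 - (n:ℝ) * infDist x F) (1 - (n:ℝ) * infDist y F) := by
    rw [Real.dist_eq, Real.dist_eq]
    exact abs_max_sub_max_le_abs _ _ _
  refine h1.trans ?_
  rw [Real.dist_eq]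
  have h2 : (1 - (n:ℝ) * infDist x F) - (1 - (n:ℝ) * infDist y F) =
      (n:ℝ) * (infDist y F - infDist x F) := by ring
  rw [h2, abs_mul, abs_of_nonneg (by positivity : (0:ℝ) ≤ (n:ℝ))]
  have h3 := (lipschitz_infDist_pt F).dist_le_mul y x
  rw [Real.dist_eq, NNReal.coe_one, one_mul] at h3
  have h4 : |infDist y F - infDist x F| ≤ dist x y := by
    rw [dist_comm]
    exact h3
  calc (n:ℝ) * |infDist y F - infDist x F| ≤ (n:ℝ) * dist x y :=
        mul_le_mul_of_nonneg_left h4 (by positivity)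
    _ = ((n : NNReal) : ℝ) * dist x y := by norm_cast

lemma tendsto_lip_integral (η : Measure (Ed d)) [IsProbabilityMeasure η]
    {F : Set (Ed d)} (hF : IsClosed F) (hFne : F.Nonempty) :
    Tendsto (fun n : ℕ => ∫ x, max (1 - (n:ℝ) * infDist x F) 0 ∂η) atTop
      (𝓝 (η F).toReal) := by
  have h := tendsto_integral_of_dominated_convergence (μ := η)
    (F := fun n : ℕ => fun x : Ed d => max (1 - (n:ℝ) * infDist x F) 0)
    (f := F.indicator (1 : Ed d → ℝ)) (bound := fun _ => (1:ℝ))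
    ?_ (integrable_const 1) ?_ ?_
  · rwa [integral_indicator_one hF.measurableSet] at h
  · intro n
    exact (((continuous_const.sub (continuous_const.mul (continuous_infDist_pt F))).max
      continuous_const)).aestronglyMeasurable
  · intro n
    refine ae_of_all _ fun x => ?_
    rw [Real.norm_eq_abs, abs_of_nonneg (le_max_right _ _)]
    refine max_le ?_ zero_le_one
    show 1 - (n:ℝ) * infDist x F ≤ (1:ℝ)
    have : (0:ℝ) ≤ (n:ℝ) * infDist x F :=
      mul_nonneg (by positivity) infDist_nonneg
    linarith
  · refine ae_of_all _ fun x => ?_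
    by_cases hx : x ∈ F
    · have hzero : infDist x F = 0 := infDist_zero_of_mem hx
      simp only [hzero, mul_zero, sub_zero, indicator_of_mem hx]
      simpa using tendsto_const_nhds
    · have hpos : 0 < infDist x F := (hF.notMem_iff_infDist_pos hFne).mp hx
      rw [indicator_of_notMem hx]
      refine tendsto_atTop_of_eventually_const (i₀ := ⌈(infDist x F)⁻¹⌉₊) fun n hn => ?_
      have h1 : ((infDist x F)⁻¹ : ℝ) ≤ (n : ℝ) :=
        le_trans (Nat.le_ceil _) (by exact_mod_cast hn)
      have h2 : (1:ℝ) ≤ (n:ℝ) * infDist x F := by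
        rw [← div_le_iff₀ hpos] at *
        calc (1:ℝ)/infDist x F = (infDist x F)⁻¹ := one_div _
          _ ≤ (n:ℝ) := h1
      exact max_eq_right (by linarith)

lemma ext_of_lipschitz_integrals (η₁ η₂ : Measure (Ed d)) [IsProbabilityMeasure η₁]
    [IsProbabilityMeasure η₂]
    (h : ∀ (f : Ed d → ℝ) (K : NNReal), LipschitzWith K f →
      ∫ x, f x ∂η₁ = ∫ x, f x ∂η₂) : η₁ = η₂ := by
  refine ext_of_generate_finite {s : Set (Ed d) | IsClosed s} ?_ isPiSystem_isClosed
    (fun F hF => ?_) (by simp)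
  · rw [BorelSpace.measurable_eq (α := Ed d), borel_eq_generateFrom_isClosed]
  · have hFc : IsClosed F := hF
    rcases eq_empty_or_nonempty F with rfl | hFne
    · simp
    have h1 := tendsto_lip_integral η₁ hFc hFne
    have h2 := tendsto_lip_integral η₂ hFc hFne
    have heq : (fun n : ℕ => ∫ x, max (1 - (n:ℝ) * infDist x F) 0 ∂η₁) =
        fun n : ℕ => ∫ x, max (1 - (n:ℝ) * infDist x F) 0 ∂η₂ := by
      funext n
      exact h _ (n : NNReal) (lip_approx F n)
    rw [heq] at h1
    have := tendsto_nhds_unique h1 h2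
    exact (ENNReal.toReal_eq_toReal_iff' (measure_ne_top _ _) (measure_ne_top _ _)).mp this

lemma integrable_lip_comp {α : Type*} [MeasurableSpace α] (P : Measure α)
    [IsProbabilityMeasure P] {X : α → Ed d} (hX : AEStronglyMeasurable X P)
    (hXi : Integrable (fun ω => ‖X ω‖) P) {φ : Ed d → ℝ} {K : NNReal}
    (hφ : LipschitzWith K φ) : Integrable (fun ω => φ (X ω)) P := by
  refine Integrable.mono' ((integrable_const |φ 0|).add (hXi.const_mul (K:ℝ)))
    (hφ.continuous.comp_aestronglyMeasurable hX) (ae_of_all _ fun ω => ?_)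
  have h1 : |φ (X ω) - φ 0| ≤ (K:ℝ) * ‖X ω‖ := by
    have := hφ.dist_le_mul (X ω) 0
    rwa [Real.dist_eq, dist_zero_right] at this
  rw [Real.norm_eq_abs]
  have h2 : |φ (X ω)| ≤ |φ (X ω) - φ 0| + |φ 0| := by
    have := abs_sub_abs_le_abs_sub (φ (X ω)) (φ 0)
    have h3 := abs_add_le (φ (X ω) - φ 0) (φ 0)
    calc |φ (X ω)| = |(φ (X ω) - φ 0) + φ 0| := by ring_nf
      _ ≤ |φ (X ω) - φ 0| + |φ 0| := abs_add_le _ _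
  calc |φ (X ω)| ≤ |φ (X ω) - φ 0| + |φ 0| := h2
    _ ≤ (K:ℝ) * ‖X ω‖ + |φ 0| := add_le_add_left h1 _
    _ = |φ 0| + (K:ℝ) * ‖X ω‖ := by ring

lemma integral_norm_le_sqrt {α : Type*} [MeasurableSpace α] (P : Measure α)
    [IsProbabilityMeasure P] {X : α → Ed d} (hX : MemLp X 2 P) :
    ∫ ω, ‖X ω‖ ∂P ≤ Real.sqrt (∫ ω, ‖X ω‖ ^ 2 ∂P) := by
  have h2 : Real.HolderConjugate 2 2 := by constructor <;> norm_num
  have hmemf : MemLp (fun ω => ‖X ω‖) (ENNReal.ofReal 2) P := by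
    have : ENNReal.ofReal 2 = 2 := by simp [ENNReal.ofReal_ofNat]
    rw [this]
    exact hX.norm
  have hmemg : MemLp (fun _ : α => (1:ℝ)) (ENNReal.ofReal 2) P := memLp_const 1
  have hH := integral_mul_le_Lp_mul_Lq_of_nonneg h2
    (ae_of_all _ fun ω => norm_nonneg (X ω)) (ae_of_all _ fun _ => zero_le_one)
    hmemf hmemg
  have hpt : ∀ ω : α, ‖X ω‖ ^ (2:ℝ) = ‖X ω‖ ^ 2 := fun ω => by
    rw [show (2:ℝ) = ((2:ℕ):ℝ) by norm_num, Real.rpow_natCast]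
  simp only [mul_one, Real.one_rpow, integral_const, measure_univ, probReal_univ, ENNReal.toReal_one,
    smul_eq_mul, one_mul, hpt] at hH
  rw [Real.sqrt_eq_rpow]
  exact hH


lemma norm_sq_L2 {α : Type*} [MeasurableSpace α] {P : Measure α}
    (f : Lp (Ed d) 2 P) : ‖f‖ ^ 2 = ∫ ω, ‖f ω‖ ^ 2 ∂P := by
  rw [← real_inner_self_eq_norm_sq f, L2.inner_def]
  exact integral_congr_ae (ae_of_all _ fun ω => real_inner_self_eq_norm_sq (f ω))

lemma key_diff_bound {α : Type*} [MeasurableSpace α] (P : Measure α) [IsProbabilityMeasure P]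
    (f g : Lp (Ed d) 2 P) {φ : Ed d → ℝ} {K : NNReal} (hφ : LipschitzWith K φ) :
    |∫ ω, φ (f ω) ∂P - ∫ ω, φ (g ω) ∂P| ≤ (K:ℝ) * ‖f - g‖ := by
  have hfi : Integrable (⇑f) P :=
    memLp_one_iff_integrable.mp ((Lp.memLp f).mono_exponent (by norm_num))
  have hgi : Integrable (⇑g) P :=
    memLp_one_iff_integrable.mp ((Lp.memLp g).mono_exponent (by norm_num))
  have hfgi : Integrable (⇑(f - g)) P :=
    memLp_one_iff_integrable.mp ((Lp.memLp (f - g)).mono_exponent (by norm_num))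
  have hintf : Integrable (fun ω => φ (f ω)) P :=
    integrable_lip_comp P (Lp.aestronglyMeasurable f) hfi.norm hφ
  have hintg : Integrable (fun ω => φ (g ω)) P :=
    integrable_lip_comp P (Lp.aestronglyMeasurable g) hgi.norm hφ
  rw [← integral_sub hintf hintg]
  have habs : |∫ ω, (φ (f ω) - φ (g ω)) ∂P| ≤ ∫ ω, |φ (f ω) - φ (g ω)| ∂P := by
    simpa [Real.norm_eq_abs] using
      norm_integral_le_integral_norm (μ := P) (fun ω => φ (f ω) - φ (g ω))
  refine habs.trans ?_
  have hstep : ∫ ω, |φ (f ω) - φ (g ω)| ∂P ≤ ∫ ω, (K:ℝ) * ‖(f - g) ω‖ ∂P := by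
    refine integral_mono_ae (hintf.sub hintg).abs (hfgi.norm.const_mul _) ?_
    filter_upwards [Lp.coeFn_sub f g] with ω hω
    have hd := hφ.dist_le_mul (f ω) (g ω)
    rw [Real.dist_eq, dist_eq_norm] at hd
    rw [hω]
    simpa using hd
  refine hstep.trans ?_
  rw [integral_const_mul]
  refine mul_le_mul_of_nonneg_left ?_ K.coe_nonneg
  refine (integral_norm_le_sqrt P (Lp.memLp (f - g))).trans ?_
  rw [← norm_sq_L2 (f - g), Real.sqrt_sq (norm_nonneg _)]

lemma memLp_of_map {α : Type*} [MeasurableSpace α] (P : Measure α) [IsProbabilityMeasure P]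
    {X : α → Ed d} (hX : AEMeasurable X P)
    (h : Integrable (fun x : Ed d => ‖x‖ ^ 2) (P.map X)) : MemLp X 2 P := by
  rw [memLp_two_iff_integrable_sq_norm hX.aestronglyMeasurable]
  exact (integrable_map_measure (continuous_norm.pow 2).aestronglyMeasurable hX).mp h

lemma integrable_sq_norm_map {α : Type*} [MeasurableSpace α] (P : Measure α)
    [IsProbabilityMeasure P] {X : α → Ed d} (hX : AEMeasurable X P) (h : MemLp X 2 P) :
    Integrable (fun x : Ed d => ‖x‖ ^ 2) (P.map X) :=
  (integrable_map_measure (continuous_norm.pow 2).aestronglyMeasurable hX).mpr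
    ((memLp_two_iff_integrable_sq_norm hX.aestronglyMeasurable).mp h)

def Cset (η μ' : Measure (Ed d)) : Set ℝ :=
  { c : ℝ | ∃ π : Measure (Ed d × Ed d),
    IsProbabilityMeasure π ∧ π.map Prod.fst = η ∧ π.map Prod.snd = μ' ∧
    c = ∫ p, ‖p.1 - p.2‖ ^ 2 ∂π }

lemma W2sq_eq_sInf_Cset (η μ' : Measure (Ed d)) : W2sq η μ' = sInf (Cset η μ') := rfl

lemma cset_nonneg {η μ' : Measure (Ed d)} : ∀ c ∈ Cset η μ', (0:ℝ) ≤ c := by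
  rintro c ⟨π, hπ, _, _, rfl⟩
  exact integral_nonneg fun p => by positivity

lemma cset_nonempty (η μ' : Measure (Ed d)) [IsProbabilityMeasure η]
    [IsProbabilityMeasure μ'] : (Cset η μ').Nonempty := by
  refine ⟨_, η.prod μ', inferInstance, ?_, ?_, rfl⟩
  · rw [Measure.map_fst_prod]; simp
  · rw [Measure.map_snd_prod]; simp

end Stmt12Aux


open Stmt12Aux

set_option maxHeartbeats 2000000

/-- Existence and uniqueness of the projection `μ̄` of `μ` on `B_ν = {η : η ≼_c ν}`
for the quadratic Wasserstein distance. -/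
theorem stmt12 {d : ℕ} (μ ν : Measure (EuclideanSpace ℝ (Fin d)))
    [IsProbabilityMeasure μ] [IsProbabilityMeasure ν]
    (hμ2 : Integrable (fun x => ‖x‖ ^ 2) μ) (hν2 : Integrable (fun x => ‖x‖ ^ 2) ν) :
    ∃! μbar : Measure (EuclideanSpace ℝ (Fin d)),
      IsProbabilityMeasure μbar ∧ Integrable (fun x => ‖x‖ ^ 2) μbar ∧
      ConvexOrder μbar ν ∧
      W2sq μbar μ = sInf { c : ℝ | ∃ η : Measure (EuclideanSpace ℝ (Fin d)),
        IsProbabilityMeasure η ∧ Integrable (fun x => ‖x‖ ^ 2) η ∧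
        ConvexOrder η ν ∧ c = W2sq η μ } := by
  classical
  set P : Measure (Om d) := μ.prod unif with hPdef
  haveI hPprob : IsProbabilityMeasure P := by rw [hPdef]; infer_instance
  have hPfst : P.map Prod.fst = μ := by
    have h := Measure.fst_prod (μ := μ) (ν := unif)
    rw [← hPdef] at h
    exact h
  have hcostc : Continuous fun p : EuclideanSpace ℝ (Fin d) × EuclideanSpace ℝ (Fin d) =>
      ‖p.1 - p.2‖ ^ 2 := ((continuous_fst.sub continuous_snd).norm).pow 2
  have hYmem : MemLp (fun ω : Om d => ω.1) 2 P := by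
    refine memLp_of_map P measurable_fst.aemeasurable ?_
    rw [show P.map (fun ω : Om d => ω.1) = μ from hPfst]
    exact hμ2
  set u : Lp (EuclideanSpace ℝ (Fin d)) 2 P := hYmem.toLp _ with hudef
  have hucoe : ⇑u =ᵐ[P] fun ω : Om d => ω.1 := hYmem.coeFn_toLp
  set K : Set (Lp (EuclideanSpace ℝ (Fin d)) 2 P) :=
    {f | ConvexOrder (P.map ⇑f) ν} with hKdef
  have hEφ : ∀ (f : Lp (EuclideanSpace ℝ (Fin d)) 2 P)
      (φ : EuclideanSpace ℝ (Fin d) → ℝ), Continuous φ →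
      ∫ x, φ x ∂(P.map ⇑f) = ∫ ω, φ (f ω) ∂P :=
    fun f φ hφ => integral_map (Lp.aestronglyMeasurable f).aemeasurable hφ.aestronglyMeasurable
  have hL1 : ∀ f : Lp (EuclideanSpace ℝ (Fin d)) 2 P, Integrable (⇑f) P :=
    fun f => memLp_one_iff_integrable.mp ((Lp.memLp f).mono_exponent (by norm_num))
  have hIntφ : ∀ (f : Lp (EuclideanSpace ℝ (Fin d)) 2 P)
      {φ : EuclideanSpace ℝ (Fin d) → ℝ} {Kφ : NNReal}, LipschitzWith Kφ φ →
      Integrable (fun ω => φ (f ω)) P :=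
    fun f _ _ hφ => integrable_lip_comp P (Lp.aestronglyMeasurable f) (hL1 f).norm hφ
  -- convexity of K
  have hKconv : Convex ℝ K := by
    intro f hf g hg a b ha hb hab
    have hf' : ConvexOrder (P.map ⇑f) ν := hf
    have hg' : ConvexOrder (P.map ⇑g) ν := hg
    show ConvexOrder (P.map ⇑(a • f + b • g)) ν
    intro φ hφc hφl
    obtain ⟨Kφ, hφK⟩ := hφl
    have hcoe : ⇑(a • f + b • g) =ᵐ[P] fun ω => a • f ω + b • g ω := by
      filter_upwards [Lp.coeFn_add (a • f) (b • g), Lp.coeFn_smul a f, Lp.coeFn_smul b g]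
        with ω h1 h2 h3
      rw [h1]
      simp only [Pi.add_apply, h2, h3, Pi.smul_apply]
    have hintf := hIntφ f hφK
    have hintg := hIntφ g hφK
    have hintc : Integrable (fun ω => φ (a • f ω + b • g ω)) P :=
      (hIntφ (a • f + b • g) hφK).congr (hcoe.mono fun ω hω => by simp only [hω])
    have h1 : ∫ x, φ x ∂(P.map ⇑(a • f + b • g)) = ∫ ω, φ (a • f ω + b • g ω) ∂P := by
      rw [hEφ _ φ hφK.continuous]
      exact integral_congr_ae (hcoe.mono fun ω hω => by simp only [hω])
    rw [h1]
    have h2 : ∫ ω, φ (a • f ω + b • g ω) ∂P ≤ ∫ ω, (a * φ (f ω) + b * φ (g ω)) ∂P := by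
      refine integral_mono_ae hintc ((hintf.const_mul a).add (hintg.const_mul b)) ?_
      refine ae_of_all _ fun ω => ?_
      have h3 := hφc.2 (mem_univ (f ω)) (mem_univ (g ω)) ha hb hab
      simpa [smul_eq_mul] using h3
    refine h2.trans ?_
    rw [integral_add (hintf.const_mul a) (hintg.const_mul b),
      integral_const_mul, integral_const_mul]
    have hfν := hf' φ hφc ⟨Kφ, hφK⟩
    have hgν := hg' φ hφc ⟨Kφ, hφK⟩
    rw [hEφ f φ hφK.continuous] at hfν
    rw [hEφ g φ hφK.continuous] at hgν
    calc a * ∫ ω, φ (f ω) ∂P + b * ∫ ω, φ (g ω) ∂P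
        ≤ a * ∫ x, φ x ∂ν + b * ∫ x, φ x ∂ν :=
          add_le_add (mul_le_mul_of_nonneg_left hfν ha) (mul_le_mul_of_nonneg_left hgν hb)
      _ = ∫ x, φ x ∂ν := by rw [← add_mul, hab, one_mul]
  -- closedness of K
  have hKclosed : IsClosed K := by
    have hKeq : K = ⋂ (φ : EuclideanSpace ℝ (Fin d) → ℝ) (_ : ConvexOn ℝ Set.univ φ)
        (Kφ : NNReal) (_ : LipschitzWith Kφ φ),
        {f : Lp (EuclideanSpace ℝ (Fin d)) 2 P | ∫ ω, φ (f ω) ∂P ≤ ∫ x, φ x ∂ν} := by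
      ext f
      simp only [hKdef, mem_setOf_eq, mem_iInter]
      constructor
      · intro hf φ hc Kφ hl
        have := hf φ hc ⟨Kφ, hl⟩
        rwa [hEφ f φ hl.continuous] at this
      · intro hall φ hc hex
        obtain ⟨Kφ, hl⟩ := hex
        rw [hEφ f φ hl.continuous]
        exact hall φ hc Kφ hl
    rw [hKeq]
    refine isClosed_iInter fun φ => isClosed_iInter fun hc => isClosed_iInter fun Kφ =>
      isClosed_iInter fun hl => ?_
    have hlipfun : LipschitzWith Kφ
        fun f : Lp (EuclideanSpace ℝ (Fin d)) 2 P => ∫ ω, φ (f ω) ∂P := by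
      refine LipschitzWith.of_dist_le_mul fun f g => ?_
      rw [Real.dist_eq, dist_eq_norm f g]
      exact key_diff_bound P f g hl
    exact isClosed_le hlipfun.continuous continuous_const
  -- nonemptiness of K
  have hνlaw : ∃ fν : Lp (EuclideanSpace ℝ (Fin d)) 2 P, P.map ⇑fν = ν := by
    obtain ⟨X, hXm, hXmap⟩ := exists_realization μ (ν.prod μ)
      (by rw [Measure.map_snd_prod]; simp)
    rw [← hPdef] at hXmap
    have hpairm : Measurable fun ω : Om d => (X ω, ω.1) := hXm.prodMk measurable_fst
    have hlaw : P.map X = ν := by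
      have h5 : (P.map (fun ω : Om d => (X ω, ω.1))).map Prod.fst = P.map X := by
        rw [Measure.map_map measurable_fst hpairm]
        rfl
      rw [hXmap, Measure.map_fst_prod] at h5
      simpa using h5.symm
    have hXmem : MemLp X 2 P := memLp_of_map P hXm.aemeasurable (by rw [hlaw]; exact hν2)
    exact ⟨hXmem.toLp X, by rw [Measure.map_congr hXmem.coeFn_toLp]; exact hlaw⟩
  obtain ⟨fν, hfν⟩ := hνlaw
  have hfνK : fν ∈ K := by
    show ConvexOrder (P.map ⇑fν) ν
    rw [hfν]
    exact fun φ _ _ => le_rfl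
  -- projection
  obtain ⟨v, hvK, hvmin⟩ := exists_norm_eq_iInf_of_complete_convex ⟨fν, hfνK⟩
    hKclosed.isComplete hKconv u
  have hmin : ∀ w ∈ K, ‖u - v‖ ≤ ‖u - w‖ := by
    intro w hw
    rw [hvmin]
    exact ciInf_le ⟨0, by rintro x ⟨w', rfl⟩; exact norm_nonneg _⟩ (⟨w, hw⟩ : K)
  set m : ℝ := ‖u - v‖ ^ 2 with hmdef
  set μbar : Measure (EuclideanSpace ℝ (Fin d)) := P.map ⇑v with hμbardef
  haveI hμbarP : IsProbabilityMeasure μbar := by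
    rw [hμbardef]
    exact Measure.isProbabilityMeasure_map (Lp.aestronglyMeasurable v).aemeasurable
  have hμbar2 : Integrable (fun x => ‖x‖ ^ 2) μbar := by
    rw [hμbardef]
    exact integrable_sq_norm_map P (Lp.aestronglyMeasurable v).aemeasurable (Lp.memLp v)
  have hμbarc : ConvexOrder μbar ν := hvK
  -- realization of couplings as Lp elements
  have hrealize : ∀ (η : Measure (EuclideanSpace ℝ (Fin d))), IsProbabilityMeasure η →
      Integrable (fun x => ‖x‖ ^ 2) η → ∀ c ∈ Cset η μ,
      ∃ Xl : Lp (EuclideanSpace ℝ (Fin d)) 2 P, P.map ⇑Xl = η ∧ ‖u - Xl‖ ^ 2 = c := by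
    rintro η hη hη2 c ⟨π, hπ, hπ1, hπ2, rfl⟩
    haveI := hη; haveI := hπ
    obtain ⟨X, hXm, hXmap⟩ := exists_realization μ π hπ2
    rw [← hPdef] at hXmap
    have hpairm : Measurable fun ω : Om d => (X ω, ω.1) := hXm.prodMk measurable_fst
    have hlaw : P.map X = η := by
      have h5 : (P.map (fun ω : Om d => (X ω, ω.1))).map Prod.fst = P.map X := by
        rw [Measure.map_map measurable_fst hpairm]
        rfl
      rw [hXmap, hπ1] at h5
      exact h5.symm
    have hXmem : MemLp X 2 P := memLp_of_map P hXm.aemeasurable (by rw [hlaw]; exact hη2)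
    refine ⟨hXmem.toLp X, by rw [Measure.map_congr hXmem.coeFn_toLp]; exact hlaw, ?_⟩
    rw [norm_sq_L2]
    have hc2 : ∫ ω, ‖(u - hXmem.toLp X) ω‖ ^ 2 ∂P = ∫ ω, ‖X ω - ω.1‖ ^ 2 ∂P := by
      refine integral_congr_ae ?_
      filter_upwards [Lp.coeFn_sub u (hXmem.toLp X), hucoe, hXmem.coeFn_toLp] with ω h1 h2 h3
      rw [h1]
      simp only [Pi.sub_apply]
      rw [h2, h3, norm_sub_rev]
    rw [hc2, ← hXmap, integral_map hpairm.aemeasurable hcostc.aestronglyMeasurable]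
  -- lower bound on costs
  have hm_le : ∀ (η : Measure (EuclideanSpace ℝ (Fin d))), IsProbabilityMeasure η →
      Integrable (fun x => ‖x‖ ^ 2) η → ConvexOrder η ν → ∀ c ∈ Cset η μ, m ≤ c := by
    intro η hη hη2 hηc c hc
    obtain ⟨Xl, hXlmap, hXlcost⟩ := hrealize η hη hη2 c hc
    have hXlK : Xl ∈ K := by
      show ConvexOrder (P.map ⇑Xl) ν
      rw [hXlmap]
      exact hηc
    rw [hmdef, ← hXlcost]
    exact pow_le_pow_left₀ (norm_nonneg _) (hmin Xl hXlK) 2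
  have hW2ge : ∀ (η : Measure (EuclideanSpace ℝ (Fin d))), IsProbabilityMeasure η →
      Integrable (fun x => ‖x‖ ^ 2) η → ConvexOrder η ν → m ≤ W2sq η μ := by
    intro η hη hη2 hηc
    haveI := hη
    rw [W2sq_eq_sInf_Cset]
    exact le_csInf (cset_nonempty η μ) (hm_le η hη hη2 hηc)
  -- the cost of the projection
  have hpairv : AEMeasurable (fun ω : Om d => (v ω, ω.1)) P :=
    (Lp.aestronglyMeasurable v).aemeasurable.prodMk measurable_fst.aemeasurable
  have hμbar_mem : m ∈ Cset μbar μ := by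
    refine ⟨P.map (fun ω : Om d => (v ω, ω.1)), Measure.isProbabilityMeasure_map hpairv, ?_, ?_, ?_⟩
    · rw [hμbardef]
      exact Measure.fst_map_prodMk₀ (X := ⇑v) measurable_fst.aemeasurable
    · have h6 := Measure.snd_map_prodMk₀ (Y := fun ω : Om d => ω.1)
        (Lp.aestronglyMeasurable v).aemeasurable
      exact h6.trans hPfst
    · have h7 : ∫ p, ‖p.1 - p.2‖ ^ 2 ∂(P.map (fun ω : Om d => (v ω, ω.1))) =
          ∫ ω, ‖v ω - ω.1‖ ^ 2 ∂P :=
        integral_map hpairv hcostc.aestronglyMeasurable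
      rw [h7, hmdef, norm_sq_L2]
      refine integral_congr_ae ?_
      filter_upwards [Lp.coeFn_sub u v, hucoe] with ω h1 h2
      rw [h1]
      simp only [Pi.sub_apply]
      rw [h2, norm_sub_rev]
  have hW2μbar : W2sq μbar μ = m := by
    refine le_antisymm ?_ (hW2ge μbar hμbarP hμbar2 hμbarc)
    rw [W2sq_eq_sInf_Cset]
    exact csInf_le ⟨0, fun c hc => cset_nonneg c hc⟩ hμbar_mem
  -- the infimum over the feasible set
  have hSlb : ∀ c ∈ { c : ℝ | ∃ η : Measure (EuclideanSpace ℝ (Fin d)),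
      IsProbabilityMeasure η ∧ Integrable (fun x => ‖x‖ ^ 2) η ∧
      ConvexOrder η ν ∧ c = W2sq η μ }, m ≤ c := by
    rintro c ⟨η, hη1, hη2, hη3, rfl⟩
    exact hW2ge η hη1 hη2 hη3
  have hSmem : m ∈ { c : ℝ | ∃ η : Measure (EuclideanSpace ℝ (Fin d)),
      IsProbabilityMeasure η ∧ Integrable (fun x => ‖x‖ ^ 2) η ∧
      ConvexOrder η ν ∧ c = W2sq η μ } :=
    ⟨μbar, hμbarP, hμbar2, hμbarc, hW2μbar.symm⟩
  have hSinf : sInf { c : ℝ | ∃ η : Measure (EuclideanSpace ℝ (Fin d)),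
      IsProbabilityMeasure η ∧ Integrable (fun x => ‖x‖ ^ 2) η ∧
      ConvexOrder η ν ∧ c = W2sq η μ } = m :=
    le_antisymm (csInf_le ⟨m, hSlb⟩ hSmem) (le_csInf ⟨m, hSmem⟩ hSlb)
  refine ⟨μbar, ⟨hμbarP, hμbar2, hμbarc, by rw [hW2μbar, hSinf]⟩, ?_⟩
  -- uniqueness
  rintro η ⟨hη1, hη2, hη3, hη4⟩
  haveI := hη1
  have hηW : W2sq η μ = m := by rw [hη4, hSinf]
  refine ext_of_lipschitz_integrals η μbar ?_
  intro φ Kφ hφ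
  have hμbarint : ∫ x, φ x ∂μbar = ∫ ω, φ (v ω) ∂P := by
    rw [hμbardef]
    exact hEφ v φ hφ.continuous
  have key : ∀ ε : ℝ, 0 < ε →
      |∫ x, φ x ∂η - ∫ x, φ x ∂μbar| ≤ (Kφ:ℝ) * Real.sqrt (2 * ε) := by
    intro ε hε
    have hlt : sInf (Cset η μ) < m + ε := by
      rw [← W2sq_eq_sInf_Cset, hηW]
      linarith
    obtain ⟨c, hcmem, hclt⟩ := exists_lt_of_csInf_lt (cset_nonempty η μ) hlt
    obtain ⟨Xl, hXlmap, hXlcost⟩ := hrealize η hη1 hη2 c hcmem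
    have hXlK : Xl ∈ K := by
      show ConvexOrder (P.map ⇑Xl) ν
      rw [hXlmap]
      exact hη3
    have hmidK : (2⁻¹:ℝ) • v + (2⁻¹:ℝ) • Xl ∈ K :=
      hKconv hvK hXlK (by norm_num) (by norm_num) (by norm_num)
    have hm_mid : m ≤ ‖u - ((2⁻¹:ℝ) • v + (2⁻¹:ℝ) • Xl)‖ ^ 2 := by
      rw [hmdef]
      exact pow_le_pow_left₀ (norm_nonneg _) (hmin _ hmidK) 2
    have hsum : (u - v) + (u - Xl) = (2:ℝ) • (u - ((2⁻¹:ℝ) • v + (2⁻¹:ℝ) • Xl)) := by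
      module
    have h4 : ‖(u - v) + (u - Xl)‖ ^ 2 =
        4 * ‖u - ((2⁻¹:ℝ) • v + (2⁻¹:ℝ) • Xl)‖ ^ 2 := by
      rw [hsum, norm_smul]
      simp [Real.norm_ofNat]
      ring
    have hdiff : (u - v) - (u - Xl) = Xl - v := by abel
    have hplaw := parallelogram_law_with_norm ℝ (u - v) (u - Xl)
    rw [hdiff] at hplaw
    have hXlv : ‖Xl - v‖ ^ 2 ≤ 2 * ε := by
      have e1 : ‖u - v‖ ^ 2 = m := hmdef.symm
      have e2 : ‖u - Xl‖ ^ 2 = c := hXlcost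
      linarith [hplaw, hm_mid, h4, hclt]
    have hdist : ‖Xl - v‖ ≤ Real.sqrt (2 * ε) := by
      rw [← Real.sqrt_sq (norm_nonneg (Xl - v))]
      exact Real.sqrt_le_sqrt hXlv
    have hηint : ∫ x, φ x ∂η = ∫ ω, φ (Xl ω) ∂P := by
      rw [← hXlmap]
      exact hEφ Xl φ hφ.continuous
    rw [hηint, hμbarint]
    refine (key_diff_bound P Xl v hφ).trans ?_
    exact mul_le_mul_of_nonneg_left hdist Kφ.coe_nonneg
  have hzero : |∫ x, φ x ∂η - ∫ x, φ x ∂μbar| = 0 := by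
    refine le_antisymm ?_ (abs_nonneg _)
    refine le_of_forall_pos_le_add fun δ hδ => ?_
    have hεpos : (0:ℝ) < (δ / ((Kφ:ℝ) + 1)) ^ 2 / 2 := by positivity
    have hb := key _ hεpos
    have hs : Real.sqrt (2 * ((δ / ((Kφ:ℝ) + 1)) ^ 2 / 2)) = δ / ((Kφ:ℝ) + 1) := by
      rw [show (2:ℝ) * ((δ / ((Kφ:ℝ) + 1)) ^ 2 / 2) = (δ / ((Kφ:ℝ) + 1)) ^ 2 by ring]
      exact Real.sqrt_sq (by positivity)
    rw [hs] at hb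
    have hKb : (Kφ:ℝ) * (δ / ((Kφ:ℝ) + 1)) ≤ δ := by
      have h0 : (0:ℝ) < (Kφ:ℝ) + 1 := by positivity
      have h1 : (Kφ:ℝ) * (δ / ((Kφ:ℝ) + 1)) = (Kφ:ℝ) * δ / ((Kφ:ℝ) + 1) := by ring
      rw [h1, div_le_iff₀ h0]
      nlinarith [Kφ.coe_nonneg, hδ.le]
    linarith
  have hfin := abs_eq_zero.mp hzero
  linarith
end
end

section
/- Let μ, ν ∈ P₂(ℝ^d) and let (X, X̄) be a W₂-optimal coupling of μ and its convex-order projection μ̄ ∈ B_ν. Then E[X̄ | X] = X̄ almost surely; in particular there exists a measurable map T : ℝ^d → ℝ^d with T(X) = X̄ a.s., i.e. the optimal transport from μ to μ̄ is given by a deterministic map. -/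
noncomputable section
open Set MeasureTheory ProbabilityTheory
open scoped RealInnerProductSpace

variable {d : ℕ}

lemma W2sq_coupling_nonneg {d : ℕ} {μ ν : Measure (EuclideanSpace ℝ (Fin d))} {c : ℝ}
    (hc : c ∈ { c : ℝ | ∃ π : Measure (EuclideanSpace ℝ (Fin d) × EuclideanSpace ℝ (Fin d)),
      IsProbabilityMeasure π ∧ π.map Prod.fst = μ ∧ π.map Prod.snd = ν ∧
      c = ∫ p, ‖p.1 - p.2‖ ^ 2 ∂π }) : 0 ≤ c := by
  obtain ⟨π, _, _, _, rfl⟩ := hc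
  exact integral_nonneg fun p => by positivity

lemma W2sq_bddBelow {d : ℕ} (μ ν : Measure (EuclideanSpace ℝ (Fin d))) :
    BddBelow { c : ℝ | ∃ π : Measure (EuclideanSpace ℝ (Fin d) × EuclideanSpace ℝ (Fin d)),
      IsProbabilityMeasure π ∧ π.map Prod.fst = μ ∧ π.map Prod.snd = ν ∧
      c = ∫ p, ‖p.1 - p.2‖ ^ 2 ∂π } :=
  ⟨0, fun _ hc => W2sq_coupling_nonneg hc⟩

lemma W2sq_nonneg {d : ℕ} (μ ν : Measure (EuclideanSpace ℝ (Fin d))) : 0 ≤ W2sq μ ν :=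
  Real.sInf_nonneg fun _ hc => W2sq_coupling_nonneg hc

lemma cost_continuous (d : ℕ) :
    Continuous (fun p : EuclideanSpace ℝ (Fin d) × EuclideanSpace ℝ (Fin d) => ‖p.1 - p.2‖ ^ 2) :=
  ((continuous_fst.sub continuous_snd).norm).pow 2

lemma W2sq_symm {d : ℕ} (μ ν : Measure (EuclideanSpace ℝ (Fin d))) : W2sq μ ν = W2sq ν μ := by
  have key : ∀ (μ ν : Measure (EuclideanSpace ℝ (Fin d))) (c : ℝ),
      (∃ π : Measure (EuclideanSpace ℝ (Fin d) × EuclideanSpace ℝ (Fin d)),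
        IsProbabilityMeasure π ∧ π.map Prod.fst = μ ∧ π.map Prod.snd = ν ∧
        c = ∫ p, ‖p.1 - p.2‖ ^ 2 ∂π) →
      (∃ π : Measure (EuclideanSpace ℝ (Fin d) × EuclideanSpace ℝ (Fin d)),
        IsProbabilityMeasure π ∧ π.map Prod.fst = ν ∧ π.map Prod.snd = μ ∧
        c = ∫ p, ‖p.1 - p.2‖ ^ 2 ∂π) := by
    rintro μ ν c ⟨π, hπ, h1, h2, rfl⟩
    refine ⟨π.map Prod.swap, Measure.isProbabilityMeasure_map measurable_swap.aemeasurable, ?_, ?_, ?_⟩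
    · rw [Measure.map_map measurable_fst measurable_swap]
      simpa [Function.comp_def] using h2
    · rw [Measure.map_map measurable_snd measurable_swap]
      simpa [Function.comp_def] using h1
    · rw [integral_map measurable_swap.aemeasurable (cost_continuous d).aestronglyMeasurable]
      simp [norm_sub_rev]
  unfold W2sq
  congr 1
  ext c
  exact ⟨key μ ν c, key ν μ c⟩

lemma integrable_of_sq_norm {Ω : Type*} [MeasurableSpace Ω] {P : Measure Ω} [IsFiniteMeasure P]
    {f : Ω → EuclideanSpace ℝ (Fin d)} (hf : AEStronglyMeasurable f P)
    (h2 : Integrable (fun ω => ‖f ω‖ ^ 2) P) : Integrable f P := by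
  refine Integrable.mono' ((integrable_const (1 : ℝ)).add h2) hf ?_
  filter_upwards with ω
  show ‖f ω‖ ≤ 1 + ‖f ω‖ ^ 2
  nlinarith [sq_nonneg (‖f ω‖ - 1), norm_nonneg (f ω)]

lemma convexOn_norm_sq :
    ConvexOn ℝ (Set.univ : Set (EuclideanSpace ℝ (Fin d))) (fun y => ‖y‖ ^ 2) := by
  refine ⟨convex_univ, fun x _ y _ a b ha hb hab => ?_⟩
  have h1 : ‖a • x + b • y‖ ≤ a * ‖x‖ + b * ‖y‖ := by
    refine (norm_add_le _ _).trans ?_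
    rw [norm_smul, norm_smul]
    simp [abs_of_nonneg ha, abs_of_nonneg hb, Real.norm_eq_abs]
  have h2 : ‖a • x + b • y‖ ^ 2 ≤ (a * ‖x‖ + b * ‖y‖) ^ 2 :=
    pow_le_pow_left₀ (norm_nonneg _) h1 2
  refine h2.trans ?_
  simp only [smul_eq_mul]
  nlinarith [mul_nonneg (mul_nonneg ha hb) (sq_nonneg (‖x‖ - ‖y‖)), norm_nonneg x, norm_nonneg y]

set_option maxHeartbeats 2000000 in
/-- If `(X, X̄)` is a `W₂`-optimal coupling between `μ` and its convex-order projection `μ̄`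
on `B_ν`, then `E[X̄|X] = X̄` a.s.; in particular the optimal transport from `μ` to `μ̄`
is given by a deterministic (measurable) map `T` with `T(X) = X̄` a.s. -/
theorem stmt14 {d : ℕ} {Ω : Type*} [MeasurableSpace Ω] (P : Measure Ω)
    [IsProbabilityMeasure P]
    (μ ν μbar : Measure (EuclideanSpace ℝ (Fin d)))
    [IsProbabilityMeasure μ] [IsProbabilityMeasure ν] [IsProbabilityMeasure μbar]
    (hμ2 : Integrable (fun x => ‖x‖ ^ 2) μ) (hν2 : Integrable (fun x => ‖x‖ ^ 2) ν)
    (hbar2 : Integrable (fun x => ‖x‖ ^ 2) μbar)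
    (hbarc : ConvexOrder μbar ν)
    (hproj : W2sq μbar μ = sInf { c : ℝ | ∃ η : Measure (EuclideanSpace ℝ (Fin d)),
      IsProbabilityMeasure η ∧ Integrable (fun x => ‖x‖ ^ 2) η ∧
      ConvexOrder η ν ∧ c = W2sq η μ })
    (X Xbar : Ω → EuclideanSpace ℝ (Fin d))
    (hX : Measurable X) (hXbar : Measurable Xbar)
    (hlawX : P.map X = μ) (hlawXbar : P.map Xbar = μbar)
    (hopt : ∫ ω, ‖X ω - Xbar ω‖ ^ 2 ∂P = W2sq μ μbar) :
    (P[Xbar | MeasurableSpace.comap X (by infer_instance)]) =ᵐ[P] Xbar ∧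
    ∃ T : EuclideanSpace ℝ (Fin d) → EuclideanSpace ℝ (Fin d), Measurable T ∧
      (fun ω => T (X ω)) =ᵐ[P] Xbar := by
  -- second moments over P
  have h2bar : Integrable (fun ω => ‖Xbar ω‖ ^ 2) P := by
    rw [← hlawXbar] at hbar2
    simpa [Function.comp_def, Pi.pow_apply] using
      (integrable_map_measure (continuous_norm.pow 2).aestronglyMeasurable
        hXbar.aemeasurable).mp hbar2
  have h2X : Integrable (fun ω => ‖X ω‖ ^ 2) P := by
    rw [← hlawX] at hμ2
    simpa [Function.comp_def, Pi.pow_apply] using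
      (integrable_map_measure (continuous_norm.pow 2).aestronglyMeasurable
        hX.aemeasurable).mp hμ2
  have hXbar_int : Integrable Xbar P := integrable_of_sq_norm hXbar.aestronglyMeasurable h2bar
  set κ := condDistrib Xbar X P with hκdef
  set T : EuclideanSpace ℝ (Fin d) → EuclideanSpace ℝ (Fin d) := fun x => ∫ y, y ∂κ x
    with hTdef
  have hT : Measurable T := by
    have h := MeasureTheory.StronglyMeasurable.integral_kernel_prod_right' (κ := κ)
      (f := fun p : (EuclideanSpace ℝ (Fin d)) × (EuclideanSpace ℝ (Fin d)) => p.2)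
      measurable_snd.stronglyMeasurable
    exact h.measurable
  have hpair : Measurable fun ω => (X ω, Xbar ω) := hX.prodMk hXbar
  have hid2 : Integrable (fun p : (EuclideanSpace ℝ (Fin d)) × (EuclideanSpace ℝ (Fin d)) => p.2)
      (P.map fun ω => (X ω, Xbar ω)) := by
    exact (integrable_map_measure measurable_snd.aestronglyMeasurable
      hpair.aemeasurable).mpr hXbar_int
  have hsq2 : Integrable
      (fun p : (EuclideanSpace ℝ (Fin d)) × (EuclideanSpace ℝ (Fin d)) => ‖p.2‖ ^ 2)
      (P.map fun ω => (X ω, Xbar ω)) := by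
    exact (integrable_map_measure (measurable_snd.norm.pow_const 2).aestronglyMeasurable
      hpair.aemeasurable).mpr h2bar
  have hae_id : ∀ᵐ x ∂P.map X, Integrable (fun y => y) (κ x) := by
    simpa using hid2.condDistrib_ae_map hXbar.aemeasurable
  have hae_sq : ∀ᵐ x ∂P.map X, Integrable (fun y => ‖y‖ ^ 2) (κ x) := by
    simpa using hsq2.condDistrib_ae_map hXbar.aemeasurable
  have hX'_int : Integrable (fun ω => T (X ω)) P :=
    hid2.integral_condDistrib hX.aemeasurable hXbar.aemeasurable
  have hJsq : ∀ᵐ x ∂P.map X, ‖T x‖ ^ 2 ≤ ∫ y, ‖y‖ ^ 2 ∂κ x := by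
    filter_upwards [hae_id, hae_sq] with x h1 h2
    exact convexOn_norm_sq.map_integral_le (continuous_norm.pow 2).continuousOn
      isClosed_univ (Filter.Eventually.of_forall fun y => mem_univ y) h1 h2
  have hX'sq : Integrable (fun ω => ‖T (X ω)‖ ^ 2) P := by
    have hInt : Integrable (fun ω => ∫ y, ‖y‖ ^ 2 ∂κ (X ω)) P :=
      hsq2.integral_condDistrib hX.aemeasurable hXbar.aemeasurable
    refine Integrable.mono' hInt ((hT.norm.pow_const 2).comp hX).aestronglyMeasurable ?_
    filter_upwards [ae_of_ae_map hX.aemeasurable hJsq] with ω h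
    simpa [abs_of_nonneg (sq_nonneg (‖T (X ω)‖))] using h
  -- Jensen for convex Lipschitz functions, via the conditional distribution
  have hJf : ∀ f : EuclideanSpace ℝ (Fin d) → ℝ, ConvexOn ℝ Set.univ f →
      (∃ K : NNReal, LipschitzWith K f) →
      ∫ ω, f (T (X ω)) ∂P ≤ ∫ ω, f (Xbar ω) ∂P := by
    rintro f hconv ⟨K, hK⟩
    have hfc : Continuous f := hK.continuous
    have hfbound : ∀ y : EuclideanSpace ℝ (Fin d), |f y| ≤ |f 0| + K * ‖y‖ := by
      intro y
      have h := hK.dist_le_mul y 0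
      rw [Real.dist_eq, dist_eq_norm, sub_zero] at h
      calc |f y| = |f y - f 0 + f 0| := by ring_nf
        _ ≤ |f y - f 0| + |f 0| := abs_add_le _ _
        _ ≤ K * ‖y‖ + |f 0| := add_le_add_left h _
        _ = |f 0| + K * ‖y‖ := add_comm _ _
    have hfXbar : Integrable (fun ω => f (Xbar ω)) P := by
      refine Integrable.mono' ((integrable_const (|f 0|)).add (hXbar_int.norm.const_mul K))
        (hfc.comp_aestronglyMeasurable hXbar.aestronglyMeasurable) ?_
      filter_upwards with ω
      simpa [Real.norm_eq_abs] using hfbound (Xbar ω)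
    have hf2 : Integrable
        (fun p : (EuclideanSpace ℝ (Fin d)) × (EuclideanSpace ℝ (Fin d)) => f p.2)
        (P.map fun ω => (X ω, Xbar ω)) :=
      (integrable_map_measure (hfc.comp continuous_snd).aestronglyMeasurable
        hpair.aemeasurable).mpr hfXbar
    have hae_f : ∀ᵐ x ∂P.map X, Integrable (fun y => f y) (κ x) := by
      simpa using hf2.condDistrib_ae_map hXbar.aemeasurable
    have hJae : ∀ᵐ x ∂P.map X, f (T x) ≤ ∫ y, f y ∂κ x := by
      filter_upwards [hae_id, hae_f] with x h1 h2
      exact hconv.map_integral_le hfc.continuousOn isClosed_univ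
        (Filter.Eventually.of_forall fun y => mem_univ y) h1 h2
    have hInt2 : Integrable (fun ω => ∫ y, f y ∂κ (X ω)) P :=
      hf2.integral_condDistrib hX.aemeasurable hXbar.aemeasurable
    have hfX' : Integrable (fun ω => f (T (X ω))) P := by
      refine Integrable.mono' ((integrable_const (|f 0|)).add (hX'_int.norm.const_mul K))
        (hfc.comp_aestronglyMeasurable ((hT.comp hX).aestronglyMeasurable)) ?_
      filter_upwards with ω
      simpa [Real.norm_eq_abs] using hfbound (T (X ω))
    calc ∫ ω, f (T (X ω)) ∂P ≤ ∫ ω, ∫ y, f y ∂κ (X ω) ∂P :=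
          integral_mono_ae hfX' hInt2 (ae_of_ae_map hX.aemeasurable hJae)
      _ = ∫ ω, (P[fun ω' => f (Xbar ω') | MeasurableSpace.comap X inferInstance]) ω ∂P :=
          (integral_congr_ae (condExp_ae_eq_integral_condDistrib hX hXbar.aemeasurable
            hfc.stronglyMeasurable hfXbar)).symm
      _ = ∫ ω, f (Xbar ω) ∂P := integral_condExp hX.comap_le
  -- the law of the conditional mean is a competitor in B_ν
  set ν' := P.map (fun ω => T (X ω)) with hν'def
  have hν'prob : IsProbabilityMeasure ν' := Measure.isProbabilityMeasure_map (hT.comp hX).aemeasurable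
  have hν'2 : Integrable (fun x => ‖x‖ ^ 2) ν' :=
    (integrable_map_measure (continuous_norm.pow 2).aestronglyMeasurable
      (hT.comp hX).aemeasurable).mpr hX'sq
  have hν'c : ConvexOrder ν' ν := by
    intro f hconv hlip
    have hfc : Continuous f := by obtain ⟨K, hK⟩ := hlip; exact hK.continuous
    calc ∫ x, f x ∂ν' = ∫ ω, f (T (X ω)) ∂P :=
          integral_map (hT.comp hX).aemeasurable hfc.aestronglyMeasurable
      _ ≤ ∫ ω, f (Xbar ω) ∂P := hJf f hconv hlip
      _ = ∫ x, f x ∂μbar := by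
          rw [← hlawXbar, integral_map hXbar.aemeasurable hfc.aestronglyMeasurable]
      _ ≤ ∫ x, f x ∂ν := hbarc f hconv hlip
  -- W₂² comparison chain
  have W2A : W2sq ν' μ ≤ ∫ ω, ‖T (X ω) - X ω‖ ^ 2 ∂P := by
    refine csInf_le (W2sq_bddBelow _ _) ?_
    have hpm : Measurable fun ω => (T (X ω), X ω) := (hT.comp hX).prodMk hX
    refine ⟨P.map (fun ω => (T (X ω), X ω)), Measure.isProbabilityMeasure_map
      hpm.aemeasurable, ?_, ?_, ?_⟩
    · rw [Measure.map_map measurable_fst hpm]; rfl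
    · rw [Measure.map_map measurable_snd hpm]; exact hlawX
    · rw [integral_map hpm.aemeasurable (cost_continuous d).aestronglyMeasurable]
  have W2B : W2sq μbar μ ≤ W2sq ν' μ := by
    rw [hproj]
    refine csInf_le ⟨0, ?_⟩ ⟨ν', hν'prob, hν'2, hν'c, rfl⟩
    rintro c ⟨η, _, _, _, rfl⟩
    exact W2sq_nonneg η μ
  have hchain : ∫ ω, ‖X ω - Xbar ω‖ ^ 2 ∂P ≤ ∫ ω, ‖X ω - T (X ω)‖ ^ 2 ∂P := by
    rw [hopt, W2sq_symm]
    refine W2B.trans (W2A.trans ?_)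
    simp_rw [norm_sub_rev (T (X _))]
    exact le_refl _
  -- integrability of the squared differences and the cross term
  have hsubsq : ∀ (U V : Ω → EuclideanSpace ℝ (Fin d)), Measurable U → Measurable V →
      Integrable (fun ω => ‖U ω‖ ^ 2) P → Integrable (fun ω => ‖V ω‖ ^ 2) P →
      Integrable (fun ω => ‖U ω - V ω‖ ^ 2) P := by
    intro U V hU hV h1 h2
    refine Integrable.mono' ((h1.const_mul 2).add (h2.const_mul 2))
      (((hU.sub hV).norm.pow_const 2).aestronglyMeasurable) ?_
    filter_upwards with ω
    have h := norm_sub_le (U ω) (V ω)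
    rw [Real.norm_eq_abs, abs_of_nonneg (sq_nonneg _)]
    show ‖U ω - V ω‖ ^ 2 ≤ 2 * ‖U ω‖ ^ 2 + 2 * ‖V ω‖ ^ 2
    nlinarith [sq_nonneg (‖U ω‖ - ‖V ω‖), norm_nonneg (U ω - V ω), norm_nonneg (U ω),
      norm_nonneg (V ω)]
  have hIsq1 : Integrable (fun ω => ‖X ω - T (X ω)‖ ^ 2) P :=
    hsubsq X (fun ω => T (X ω)) hX (hT.comp hX) h2X hX'sq
  have hIsq2 : Integrable (fun ω => ‖T (X ω) - Xbar ω‖ ^ 2) P :=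
    hsubsq (fun ω => T (X ω)) Xbar (hT.comp hX) hXbar hX'sq h2bar
  have hInner_int : Integrable (fun ω => ⟪X ω - T (X ω), T (X ω) - Xbar ω⟫) P := by
    refine Integrable.mono' (hIsq1.add hIsq2)
      (((hX.sub (hT.comp hX)).inner ((hT.comp hX).sub hXbar)).aestronglyMeasurable) ?_
    filter_upwards with ω
    have h := abs_real_inner_le_norm (X ω - T (X ω)) (T (X ω) - Xbar ω)
    rw [Real.norm_eq_abs]
    show |⟪X ω - T (X ω), T (X ω) - Xbar ω⟫| ≤ ‖X ω - T (X ω)‖ ^ 2 + ‖T (X ω) - Xbar ω‖ ^ 2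
    nlinarith [sq_nonneg (‖X ω - T (X ω)‖ - ‖T (X ω) - Xbar ω‖)]
  -- the cross term vanishes
  have hf0meas : Measurable
      (fun p : (EuclideanSpace ℝ (Fin d)) × (EuclideanSpace ℝ (Fin d)) =>
        ⟪p.1 - T p.1, T p.1 - p.2⟫) :=
    (measurable_fst.sub (hT.comp measurable_fst)).inner
      ((hT.comp measurable_fst).sub measurable_snd)
  have hcross_ae : ∀ᵐ x ∂P.map X, ∫ y, ⟪x - T x, T x - y⟫ ∂κ x = 0 := by
    filter_upwards [hae_id] with x hx
    have h1 : ∫ y, (T x - y) ∂κ x = 0 := by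
      rw [integral_sub (integrable_const _) hx, integral_const]
      simp [hTdef]
    calc ∫ y, ⟪x - T x, T x - y⟫ ∂κ x
        = (innerSL ℝ (x - T x)) (∫ y, (T x - y) ∂κ x) :=
          (innerSL ℝ (x - T x)).integral_comp_comm ((integrable_const (T x)).sub hx)
      _ = 0 := by rw [h1]; simp
  have hce : P[fun ω => ⟪X ω - T (X ω), T (X ω) - Xbar ω⟫ |
        MeasurableSpace.comap X inferInstance] =ᵐ[P]
      fun ω => ∫ y, ⟪X ω - T (X ω), T (X ω) - y⟫ ∂κ (X ω) :=
    condExp_prod_ae_eq_integral_condDistrib (μ := P) (X := X) (Y := Xbar) hX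
      hXbar.aemeasurable hf0meas.stronglyMeasurable hInner_int
  have hcross : ∫ ω, ⟪X ω - T (X ω), T (X ω) - Xbar ω⟫ ∂P = 0 := by
    have h1 : ∫ ω, ⟪X ω - T (X ω), T (X ω) - Xbar ω⟫ ∂P
        = ∫ ω, (P[fun ω => ⟪X ω - T (X ω), T (X ω) - Xbar ω⟫ |
            MeasurableSpace.comap X inferInstance]) ω ∂P :=
      (integral_condExp hX.comap_le).symm
    rw [h1, integral_congr_ae hce]
    refine integral_eq_zero_of_ae ?_
    filter_upwards [ae_of_ae_map hX.aemeasurable hcross_ae] with ω h using h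
  -- Pythagoras
  have hsplit : ∫ ω, ‖X ω - Xbar ω‖ ^ 2 ∂P =
      ∫ ω, ‖X ω - T (X ω)‖ ^ 2 ∂P + ∫ ω, ‖T (X ω) - Xbar ω‖ ^ 2 ∂P := by
    have hpt : ∀ ω, ‖X ω - Xbar ω‖ ^ 2 =
        ‖X ω - T (X ω)‖ ^ 2 + 2 * ⟪X ω - T (X ω), T (X ω) - Xbar ω⟫
          + ‖T (X ω) - Xbar ω‖ ^ 2 := by
      intro ω
      have h := norm_add_sq_real (X ω - T (X ω)) (T (X ω) - Xbar ω)
      rw [sub_add_sub_cancel] at h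
      exact h
    calc ∫ ω, ‖X ω - Xbar ω‖ ^ 2 ∂P
        = ∫ ω, (‖X ω - T (X ω)‖ ^ 2 + 2 * ⟪X ω - T (X ω), T (X ω) - Xbar ω⟫
            + ‖T (X ω) - Xbar ω‖ ^ 2) ∂P :=
          integral_congr_ae (Filter.Eventually.of_forall fun ω => hpt ω)
      _ = ∫ ω, (‖X ω - T (X ω)‖ ^ 2 + 2 * ⟪X ω - T (X ω), T (X ω) - Xbar ω⟫) ∂P
            + ∫ ω, ‖T (X ω) - Xbar ω‖ ^ 2 ∂P :=
          integral_add (hIsq1.add (hInner_int.const_mul 2)) hIsq2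
      _ = ∫ ω, ‖X ω - T (X ω)‖ ^ 2 ∂P + ∫ ω, ‖T (X ω) - Xbar ω‖ ^ 2 ∂P := by
          rw [integral_add hIsq1 (hInner_int.const_mul 2), integral_const_mul 2 _, hcross]
          ring
  have hzero : ∫ ω, ‖T (X ω) - Xbar ω‖ ^ 2 ∂P = 0 := by
    have h0 : 0 ≤ ∫ ω, ‖T (X ω) - Xbar ω‖ ^ 2 ∂P := integral_nonneg fun ω => sq_nonneg _
    linarith [hsplit, hchain]
  have hfinal : (fun ω => T (X ω)) =ᵐ[P] Xbar := by
    have h := (integral_eq_zero_iff_of_nonneg (fun ω => sq_nonneg _) hIsq2).mp hzero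
    filter_upwards [h] with ω hω
    have h1 : ‖T (X ω) - Xbar ω‖ ^ 2 = 0 := hω
    have h2 : T (X ω) - Xbar ω = 0 := by
      rwa [pow_eq_zero_iff (by norm_num : (2 : ℕ) ≠ 0), norm_eq_zero] at h1
    exact sub_eq_zero.mp h2
  have hcondX' : (P[Xbar | MeasurableSpace.comap X (by infer_instance)]) =ᵐ[P]
      fun ω => T (X ω) :=
    condExp_ae_eq_integral_condDistrib' hX hXbar_int
  exact ⟨hcondX'.trans hfinal, T, hT, hfinal⟩
end
end
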